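/- arXiv:2110.02310 — 2 statements merged into one kernel-verified Lean document; each statement's English description precedes it below -/
import Mathlib

section
/- Let T be a C₀-semigroup on L_p(μ), 1 < p < ∞, with T(s) ≥ 0 for all s ≥ t₀. Fix f ∈ L_p(μ)₊ and set g := (∫_{t₀}^{t₀+1} (T(t) f)^p dt)^{1/p} ∈ L_p(μ). Then for every s ≥ t₀ and every nonnegative h ∈ L_{p'}(ℝ) with ‖h‖_{p'} ≤ 1, one has ∫_{s+t₀}^{s+t₀+1} h(t) T(t) f dt ≤ T(s) g in the lattice order of L_p(μ). -/
/-
Substituting `t = s + τ` and using the semigroup law, the left-hand side is `T s u` with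
`u = ∫_{t₀}^{t₀+1} h (s + τ) • T τ f dτ`, so by positivity of `T s` it suffices to show `u ≤ g`.
This is tested on sets `A` of finite measure: there the `L_p`-valued integral can be computed
pointwise by Fubini, `∫_A u = ∫_A ∫ h (s + τ) F τ x dτ dx`, and for a.e. `x` Hölder's inequality
in `τ` bounds the inner integral by `‖h‖_{p'} (∫ F τ x ^ p dτ) ^ (1/p) ≤ g x`.
-/

open MeasureTheory ENNReal

/-- `T` is a `C₀`-semigroup: `T 0 = I`, the semigroup law holds for nonnegative times,
and the orbit maps are strongly continuous on `[0, ∞)`. -/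
def IsC0Semigroup {X : Type*} [NormedAddCommGroup X] [NormedSpace ℝ X]
    (T : ℝ → X →L[ℝ] X) : Prop :=
  T 0 = ContinuousLinearMap.id ℝ X ∧
  (∀ s t : ℝ, 0 ≤ s → 0 ≤ t → T (s + t) = (T s).comp (T t)) ∧
  ∀ f : X, ContinuousOn (fun t => T t f) (Set.Ici 0)


open Set Function

namespace MeasureTheory

section LpValuedIntegral

variable {Ω E : Type*} [MeasurableSpace Ω] {μ : Measure Ω} {p : ℝ≥0∞} [Fact (1 ≤ p)]
  [NormedAddCommGroup E]

theorem Lp.setIntegral_norm_le (w : Lp E p μ) {A : Set Ω} (hA : μ A ≠ ∞) :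
    ∫ x in A, ‖w x‖ ∂μ ≤ (μ A).toReal ^ (1 - p.toReal⁻¹) * ‖w‖ := by
  have : IsFiniteMeasure (μ.restrict A) := isFiniteMeasure_restrict.2 hA
  have hexp : 0 ≤ 1 - p.toReal⁻¹ := by
    rcases eq_or_ne p ∞ with rfl | hp
    · simp
    · exact sub_nonneg.2 (inv_le_one_of_one_le₀ (by simpa using toReal_mono hp (Fact.out : 1 ≤ p)))
  have hfin : eLpNorm w p μ * μ A ^ (1 - p.toReal⁻¹) ≠ ∞ :=
    mul_ne_top (Lp.eLpNorm_ne_top w) (rpow_ne_top_of_nonneg hexp hA)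
  calc ∫ x in A, ‖w x‖ ∂μ = (eLpNorm w 1 (μ.restrict A)).toReal := by
        rw [eLpNorm_one_eq_lintegral_enorm,
          integral_norm_eq_lintegral_enorm (Lp.aestronglyMeasurable w).restrict]
    _ ≤ (eLpNorm w p μ * μ A ^ (1 - p.toReal⁻¹)).toReal := by
        refine toReal_mono hfin ?_
        calc eLpNorm w 1 (μ.restrict A)
            ≤ eLpNorm w p (μ.restrict A) * μ A ^ (1 - p.toReal⁻¹) := by
              simpa using eLpNorm_le_eLpNorm_mul_rpow_measure_univ (Fact.out : 1 ≤ p)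
                (Lp.aestronglyMeasurable w).restrict (μ := μ.restrict A)
          _ ≤ eLpNorm w p μ * μ A ^ (1 - p.toReal⁻¹) :=
              mul_le_mul_left (eLpNorm_mono_measure _ Measure.restrict_le_self) _
    _ = (μ A).toReal ^ (1 - p.toReal⁻¹) * ‖w‖ := by
        rw [toReal_mul, toReal_rpow, Lp.norm_def, mul_comm]

variable {α : Type*} [MeasurableSpace α] {ν : Measure α}
  {φ : α → Lp E p μ} {F : α → Ω → E}

theorem Lp.integrable_uncurry_restrict (hφ : Integrable φ ν)
    (hF : StronglyMeasurable (uncurry F)) (hφF : ∀ᵐ τ ∂ν, φ τ =ᵐ[μ] F τ)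
    {A : Set Ω} (hA : μ A ≠ ∞) : Integrable (uncurry F) (ν.prod (μ.restrict A)) := by
  have : IsFiniteMeasure (μ.restrict A) := isFiniteMeasure_restrict.2 hA
  refine (integrable_prod_iff hF.aestronglyMeasurable).2 ⟨?_, ?_⟩
  · filter_upwards [hφF] with τ hτ
    exact (integrableOn_Lp_of_measure_ne_top (φ τ) Fact.out hA).congr (ae_restrict_of_ae hτ)
  · refine (hφ.norm.const_mul ((μ A).toReal ^ (1 - p.toReal⁻¹))).mono'
      hF.norm.aestronglyMeasurable.integral_prod_right' ?_
    filter_upwards [hφF] with τ hτ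
    rw [Real.norm_of_nonneg (integral_nonneg fun _ => norm_nonneg _)]
    calc ∫ x in A, ‖F τ x‖ ∂μ = ∫ x in A, ‖φ τ x‖ ∂μ :=
          integral_congr_ae (ae_restrict_of_ae (hτ.mono fun x hx => by simp [hx]))
      _ ≤ _ := Lp.setIntegral_norm_le (φ τ) hA

variable [NormedSpace ℝ E]

noncomputable def Lp.setIntegralCLM (A : Set Ω) (hA : μ A ≠ ∞) : Lp E p μ →L[ℝ] E :=
  LinearMap.mkContinuous
    { toFun := fun w => ∫ x in A, w x ∂μ
      map_add' := fun v w => by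
        rw [integral_congr_ae (ae_restrict_of_ae (Lp.coeFn_add v w))]
        exact integral_add (integrableOn_Lp_of_measure_ne_top v Fact.out hA)
          (integrableOn_Lp_of_measure_ne_top w Fact.out hA)
      map_smul' := fun c w => by
        rw [integral_congr_ae (ae_restrict_of_ae (Lp.coeFn_smul c w))]
        exact integral_smul c _ }
    ((μ A).toReal ^ (1 - p.toReal⁻¹))
    fun w => (norm_integral_le_integral_norm _).trans (Lp.setIntegral_norm_le w hA)

variable [SFinite ν]

theorem Lp.setIntegral_integral_eq [CompleteSpace E] (hφ : Integrable φ ν)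
    (hF : StronglyMeasurable (uncurry F)) (hφF : ∀ᵐ τ ∂ν, φ τ =ᵐ[μ] F τ)
    {A : Set Ω} (hA : μ A ≠ ∞) :
    ∫ x in A, (∫ τ, φ τ ∂ν) x ∂μ = ∫ x in A, ∫ τ, F τ x ∂ν ∂μ := by
  have : IsFiniteMeasure (μ.restrict A) := isFiniteMeasure_restrict.2 hA
  calc ∫ x in A, (∫ τ, φ τ ∂ν) x ∂μ = ∫ τ, Lp.setIntegralCLM A hA (φ τ) ∂ν :=
        ((Lp.setIntegralCLM A hA).integral_comp_comm hφ).symm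
    _ = ∫ τ, ∫ x in A, F τ x ∂μ ∂ν := by
        refine integral_congr_ae ?_
        filter_upwards [hφF] with τ hτ
        exact integral_congr_ae (ae_restrict_of_ae hτ)
    _ = ∫ x in A, ∫ τ, F τ x ∂ν ∂μ :=
        integral_integral_swap (Lp.integrable_uncurry_restrict hφ hF hφF hA)

theorem Lp.le_of_forall_setIntegral_le (hp : p ≠ ∞) {u g : Lp ℝ p μ}
    (h : ∀ A, MeasurableSet A → μ A < ∞ → ∫ x in A, u x ∂μ ≤ ∫ x in A, g x ∂μ) : u ≤ g := by
  have hp0 : p ≠ 0 := (one_pos.trans_le Fact.out).ne'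
  have hint : ∀ (w : Lp ℝ p μ) A, μ A < ∞ → IntegrableOn w A μ := fun w A hA =>
    integrableOn_Lp_of_measure_ne_top w Fact.out hA.ne
  have hsub : 0 ≤ᵐ[μ] (g : Ω → ℝ) - (u : Ω → ℝ) :=
    ((Lp.finStronglyMeasurable g hp0 hp).sub (Lp.finStronglyMeasurable u hp0 hp)
      ).aefinStronglyMeasurable.ae_nonneg_of_forall_setIntegral_nonneg
      (fun A _ hA => (hint g A hA).sub (hint u A hA)) fun A hA hμA => by
        rw [Pi.sub_def, integral_sub (hint g A hμA) (hint u A hμA), sub_nonneg]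
        exact h A hA hμA
  rw [← Lp.coeFn_le]
  filter_upwards [hsub] with x hx
  simpa using hx

/-- The pointwise bound is only required on sets of finite measure because `μ` need not be
σ-finite, so Tonelli's theorem is only available after restricting to such a set. -/
theorem Lp.integral_le_of_forall_ae_restrict_le (hp : p ≠ ∞) {φ : α → Lp ℝ p μ}
    (hφ : Integrable φ ν) {F : α → Ω → ℝ} (hF : StronglyMeasurable (uncurry F))
    (hφF : ∀ᵐ τ ∂ν, φ τ =ᵐ[μ] F τ) {g : Lp ℝ p μ}
    (hg : ∀ A, MeasurableSet A → μ A < ∞ → ∀ᵐ x ∂μ.restrict A, ∫ τ, F τ x ∂ν ≤ g x) :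
    ∫ τ, φ τ ∂ν ≤ g :=
  Lp.le_of_forall_setIntegral_le hp fun A hA hμA => by
    have : IsFiniteMeasure (μ.restrict A) := isFiniteMeasure_restrict.2 hμA.ne
    rw [Lp.setIntegral_integral_eq hφ hF hφF hμA.ne]
    exact integral_mono_ae (Lp.integrable_uncurry_restrict hφ hF hφF hμA.ne).integral_prod_right
      (integrableOn_Lp_of_measure_ne_top g Fact.out hμA.ne) (hg A hA hμA)

end LpValuedIntegral

section Holder

variable {α Ω E : Type*} [MeasurableSpace α] [MeasurableSpace Ω] {ν : Measure α} {μ : Measure Ω}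
  [NormedAddCommGroup E]

theorem ae_memLp_of_lintegral_eLpNorm_rpow_ne_top [SFinite ν] [SFinite μ] {p : ℝ≥0∞}
    (hp0 : p ≠ 0) (hp : p ≠ ∞) {F : α → Ω → E} (hF : StronglyMeasurable (uncurry F))
    (hfin : ∫⁻ τ, eLpNorm (F τ) p μ ^ p.toReal ∂ν ≠ ∞) :
    ∀ᵐ x ∂μ, MemLp (fun τ => F τ x) p ν := by
  have hmeas : Measurable (uncurry fun x τ => ‖F τ x‖ₑ ^ p.toReal) :=
    (hF.enorm.pow_const _).comp measurable_swap
  have hnorm : ∀ τ, eLpNorm (F τ) p μ ^ p.toReal = ∫⁻ x, ‖F τ x‖ₑ ^ p.toReal ∂μ := fun τ => by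
    rw [eLpNorm_eq_eLpNorm' hp0 hp, lintegral_rpow_enorm_eq_rpow_eLpNorm' (toReal_pos hp0 hp)]
  have hswap : ∫⁻ x, ∫⁻ τ, ‖F τ x‖ₑ ^ p.toReal ∂ν ∂μ ≠ ∞ := by
    rw [lintegral_lintegral_swap hmeas.aemeasurable]
    simpa only [hnorm] using hfin
  filter_upwards [ae_lt_top hmeas.lintegral_prod_right' hswap] with x hx
  exact ⟨(hF.comp_measurable measurable_prodMk_right).aestronglyMeasurable,
    (eLpNorm_lt_top_iff_lintegral_rpow_enorm_lt_top hp0 hp).2 hx⟩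

theorem integral_mul_le_of_eLpNorm_le_one {p q : ℝ} (hpq : p.HolderConjugate q) {f k : α → ℝ}
    (hf0 : 0 ≤ᵐ[ν] f) (hk0 : 0 ≤ᵐ[ν] k) (hf : MemLp f (.ofReal p) ν) (hk : MemLp k (.ofReal q) ν)
    (hk1 : eLpNorm k (.ofReal q) ν ≤ 1) :
    ∫ a, f a * k a ∂ν ≤ (∫ a, f a ^ p ∂ν) ^ (1 / p) := by
  have hkq : (∫ a, k a ^ q ∂ν) ^ (1 / q) ≤ 1 := by
    rw [hk.eLpNorm_eq_integral_rpow_norm (by simpa using hpq.symm.pos) ofReal_ne_top,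
      toReal_ofReal hpq.symm.nonneg, ofReal_le_one] at hk1
    have hnorm : ∫ a, ‖k a‖ ^ q ∂ν = ∫ a, k a ^ q ∂ν :=
      integral_congr_ae (hk0.mono fun a (ha : 0 ≤ k a) => by simp only [Real.norm_of_nonneg ha])
    rwa [one_div, ← hnorm]
  calc ∫ a, f a * k a ∂ν ≤ (∫ a, f a ^ p ∂ν) ^ (1 / p) * (∫ a, k a ^ q ∂ν) ^ (1 / q) :=
        integral_mul_le_Lp_mul_Lq_of_nonneg hpq hf0 hk0 hf hk
    _ ≤ (∫ a, f a ^ p ∂ν) ^ (1 / p) :=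
        mul_le_of_le_one_right (Real.rpow_nonneg (integral_nonneg_of_ae
          (hf0.mono fun a ha => Real.rpow_nonneg ha p)) _) hkq

variable [SFinite ν] {p q : ℝ≥0∞} [Fact (1 ≤ p)]

theorem Lp.ae_restrict_memLp_of_memLp (hp0 : p ≠ 0) (hp : p ≠ ∞) {φ : α → Lp ℝ p μ}
    (hφ : MemLp φ p ν) {F : α → Ω → ℝ} (hF : StronglyMeasurable (uncurry F))
    (hφF : ∀ᵐ τ ∂ν, φ τ =ᵐ[μ] F τ) {A : Set Ω} (hA : μ A ≠ ∞) :
    ∀ᵐ x ∂μ.restrict A, MemLp (fun τ => F τ x) p ν := by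
  have : IsFiniteMeasure (μ.restrict A) := isFiniteMeasure_restrict.2 hA
  refine ae_memLp_of_lintegral_eLpNorm_rpow_ne_top hp0 hp hF (ne_top_of_le_ne_top
    ((eLpNorm_lt_top_iff_lintegral_rpow_enorm_lt_top hp0 hp).1 hφ.2).ne ?_)
  refine lintegral_mono_ae (hφF.mono fun τ hτ => rpow_le_rpow ?_ toReal_nonneg)
  rw [Lp.enorm_def, eLpNorm_congr_ae hτ]
  exact eLpNorm_mono_measure _ Measure.restrict_le_self

variable [p.HolderConjugate q]

theorem Lp.integral_smul_le_of_eLpNorm_le_one (hp : p ≠ ∞) (hq : q ≠ ∞)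
    {φ : α → Lp ℝ p μ} (hφ : MemLp φ p ν) (hφ0 : ∀ᵐ τ ∂ν, 0 ≤ φ τ)
    {F : α → Ω → ℝ} (hF : StronglyMeasurable (uncurry F)) (hφF : ∀ᵐ τ ∂ν, φ τ =ᵐ[μ] F τ)
    {k : α → ℝ} (hk0 : 0 ≤ᵐ[ν] k) (hkq : MemLp k q ν) (hk1 : eLpNorm k q ν ≤ 1)
    {g : Lp ℝ p μ} (hg : ∀ᵐ x ∂μ, g x = (∫ τ, F τ x ^ p.toReal ∂ν) ^ (1 / p.toReal)) :
    ∫ τ, k τ • φ τ ∂ν ≤ g := by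
  -- a strongly measurable version of `k` makes `(τ, x) ↦ k τ * F τ x` jointly measurable
  obtain ⟨k', hk', hkk'⟩ := hkq.1
  rw [integral_congr_ae (g := fun τ => k' τ • φ τ) (hkk'.mono fun τ hτ => by rw [hτ])]
  replace hk0 : 0 ≤ᵐ[ν] k' := by filter_upwards [hk0, hkk'] with τ h0 hτ using hτ ▸ h0
  replace hkq := hkq.ae_eq hkk'
  rw [eLpNorm_congr_ae hkk'] at hk1
  have hp0 : p ≠ 0 := HolderConjugate.ne_zero p q
  have hpq : p.toReal.HolderConjugate q.toReal := HolderConjugate.toReal_of_ne_top hp hq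
  refine Lp.integral_le_of_forall_ae_restrict_le hp (memLp_one_iff_integrable.1 (hφ.smul hkq))
    (F := fun τ x => k' τ * F τ x) ((hk'.comp_measurable measurable_fst).mul hF) ?_
    fun A _ hμA => ?_
  · filter_upwards [hφF] with τ hτ
    filter_upwards [Lp.coeFn_smul (k' τ) (φ τ), hτ] with x hx hτx
    simp [hx, hτx]
  have : IsFiniteMeasure (μ.restrict A) := isFiniteMeasure_restrict.2 hμA.ne
  have hF0 : ∀ᵐ x ∂μ.restrict A, ∀ᵐ τ ∂ν, 0 ≤ F τ x := by
    refine (Measure.ae_ae_comm (measurableSet_le (f := fun _ => (0 : ℝ)) measurable_const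
      (hF.measurable.comp measurable_swap))).2 ?_
    filter_upwards [hφ0, hφF] with τ hτ0 hτ
    filter_upwards [ae_restrict_of_ae ((Lp.coeFn_nonneg _).2 hτ0), ae_restrict_of_ae hτ]
      with x hx hτx
    simpa [← hτx] using hx
  filter_upwards [Lp.ae_restrict_memLp_of_memLp hp0 hp hφ hF hφF hμA.ne, hF0,
    ae_restrict_of_ae hg] with x hx hx0 hgx
  rw [hgx]
  simp_rw [mul_comm (k' _)]
  exact integral_mul_le_of_eLpNorm_le_one hpq hx0 hk0 (by rwa [ofReal_toReal hp])
    (by rwa [ofReal_toReal hq]) (by rwa [ofReal_toReal hq])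

end Holder

end MeasureTheory

theorem ContinuousOn.memLp_of_isCompact {α X : Type*} [TopologicalSpace α] [MeasurableSpace α]
    [OpensMeasurableSpace α] [NormedAddCommGroup X] {μ : Measure α} [IsFiniteMeasureOnCompacts μ]
    {φ : α → X} {K : Set α} (hφ : ContinuousOn φ K) (hK : IsCompact K) (hKm : MeasurableSet K)
    (p : ℝ≥0∞) : MemLp φ p (μ.restrict K) := by
  obtain ⟨C, hC⟩ := hK.exists_bound_of_continuousOn hφ
  have : IsFiniteMeasure (μ.restrict K) := isFiniteMeasure_restrict.2 hK.measure_lt_top.ne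
  exact (memLp_top_of_bound (hφ.aestronglyMeasurable_of_isCompact hK hKm) C
    ((ae_restrict_iff' hKm).2 (ae_of_all _ hC))).mono_exponent le_top

theorem setIntegral_Icc_comp_add_left {E : Type*} [NormedAddCommGroup E] [NormedSpace ℝ E]
    (φ : ℝ → E) (s a b : ℝ) :
    ∫ t in Icc (s + a) (s + b), φ t = ∫ τ in Icc a b, φ (s + τ) := by
  rw [← (measurePreserving_add_left volume s).setIntegral_preimage_emb
    (measurableEmbedding_addLeft s), preimage_const_add_Icc]
  simp

theorem IsC0Semigroup.setIntegral_smul_apply_add {X : Type*} [NormedAddCommGroup X]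
    [NormedSpace ℝ X] [CompleteSpace X] {T : ℝ → X →L[ℝ] X} (hT : IsC0Semigroup T)
    {s : ℝ} (hs : 0 ≤ s) {S : Set ℝ} (hS : MeasurableSet S) (hS0 : S ⊆ Ici 0) {c : ℝ → ℝ}
    {f : X} (hint : IntegrableOn (fun τ => c τ • T τ f) S) :
    ∫ τ in S, c τ • T (s + τ) f = T s (∫ τ in S, c τ • T τ f) := by
  rw [← (T s).integral_comp_comm hint]
  refine setIntegral_congr_fun hS fun τ hτ => ?_
  rw [hT.2.1 s τ hs (hS0 hτ), ContinuousLinearMap.comp_apply, map_smul]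

/-- Let `T` be a `C₀`-semigroup on `L_p(μ)` with `T(s) ≥ 0` for
`s ≥ t₀`, let `f ∈ L_p(μ)₊`, and let `g = (∫_{t₀}^{t₀+1} (T(t)f)^p dt)^{1/p} ∈ L_p(μ)`
(defined pointwise a.e. via a jointly measurable representative `F` of `t ↦ T(t)f`).
Then for every `s ≥ t₀` and every nonnegative `h ∈ L_{p'}(ℝ)` with `‖h‖_{p'} ≤ 1`,
`∫_{s+t₀}^{s+t₀+1} h(t) T(t) f dt ≤ T(s) g` in the lattice order of `L_p(μ)`. -/
theorem stmt4 {Ω : Type*} [MeasurableSpace Ω] (μ : Measure Ω)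
    {p q : ℝ≥0∞} [Fact (1 ≤ p)] (hp : 1 < p) (hp' : p ≠ ⊤) (hpq : 1 / p + 1 / q = 1)
    (T : ℝ → Lp ℝ p μ →L[ℝ] Lp ℝ p μ) (hT : IsC0Semigroup T)
    (t₀ : ℝ) (ht₀ : 0 ≤ t₀)
    (hpos : ∀ s : ℝ, t₀ ≤ s → ∀ u : Lp ℝ p μ, 0 ≤ u → 0 ≤ T s u)
    (f : Lp ℝ p μ) (hf : 0 ≤ f)
    (F : ℝ → Ω → ℝ) (hFmeas : Measurable (Function.uncurry F))
    (hF : ∀ t : ℝ, (T t f : Ω → ℝ) =ᵐ[μ] F t)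
    (g : Lp ℝ p μ)
    (hg : ∀ᵐ x ∂μ, (g : Ω → ℝ) x
      = (∫ t in Set.Icc t₀ (t₀ + 1), F t x ^ p.toReal) ^ (1 / p.toReal)) :
    ∀ s : ℝ, t₀ ≤ s → ∀ h : ℝ → ℝ, MemLp h q volume → (∀ t, 0 ≤ h t) →
      eLpNorm h q volume ≤ 1 →
      (∫ t in Set.Icc (s + t₀) (s + t₀ + 1), h t • T t f) ≤ T s g := by
  intro s hs h hh hh0 hh1
  have : p.HolderConjugate q := holderConjugate_iff.2 (by simpa only [one_div] using hpq)
  have hq : q ≠ ∞ := (HolderConjugate.ne_top_iff_ne_one q p).2 hp.ne'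
  set I := Icc t₀ (t₀ + 1)
  have hI : I ⊆ Ici 0 := fun τ hτ => ht₀.trans hτ.1
  have hφ : MemLp (fun τ => T τ f) p (volume.restrict I) :=
    ((hT.2.2 f).mono hI).memLp_of_isCompact isCompact_Icc measurableSet_Icc p
  have hadd := measurePreserving_add_left volume s
  have hhs : MemLp (fun τ => h (s + τ)) q (volume.restrict I) :=
    (hh.comp_measurePreserving hadd).restrict I
  have hhs1 : eLpNorm (fun τ => h (s + τ)) q (volume.restrict I) ≤ 1 :=
    (eLpNorm_mono_measure _ Measure.restrict_le_self).trans
      ((eLpNorm_comp_measurePreserving hh.1 hadd).trans_le hh1)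
  have hshift : ∫ t in Icc (s + t₀) (s + t₀ + 1), h t • T t f
      = T s (∫ τ in I, h (s + τ) • T τ f) := by
    rw [add_assoc, setIntegral_Icc_comp_add_left]
    exact hT.setIntegral_smul_apply_add (ht₀.trans hs) measurableSet_Icc hI
      (memLp_one_iff_integrable.1 (hφ.smul hhs))
  have hle : ∫ τ in I, h (s + τ) • T τ f ≤ g :=
    Lp.integral_smul_le_of_eLpNorm_le_one hp' hq hφ
      ((ae_restrict_mem measurableSet_Icc).mono fun τ hτ => hpos τ hτ.1 f hf)
      hFmeas.stronglyMeasurable (ae_of_all _ hF) (ae_of_all _ fun τ => hh0 (s + τ)) hhs hhs1 hg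
  rw [hshift, ← sub_nonneg, ← map_sub]
  exact hpos s hs _ (sub_nonneg.2 hle)
end

section
/- Let T be a C₀-semigroup on L_p(μ) with 1 < p < ∞ and generator A. If for every f ∈ L_p(μ) the function t ↦ ‖T(t) f‖^p is integrable on (0, ∞), then the growth bound satisfies ω₀(T) < 0. -/
open MeasureTheory ENNReal

/-!
The orbit map `f ↦ T(·) f` sends `X` into `L^p(0, ∞)`, and it is bounded by the uniform
boundedness principle: `f ↦ ‖T(·) f‖_{L^p}` is a seminorm that is lower semicontinuous by Fatou's
lemma, hence continuous since a Banach space is barrelled. Writing `T(t) f = T(t - s) T(s) f` and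
averaging over `s` in an interval of length `L` ending at `t` then gives
`L^{1/p} ‖T(t) f‖ ≤ sup_s ‖T(t - s)‖ · C ‖f‖`. With `L = 1` this bounds `T` uniformly by some
`M`, and with `L = (2MC)^p` it gives `‖T(t₀)‖ ≤ 1/2` for some `t₀ > 0`; exponential decay follows
from the submultiplicativity of `t ↦ ‖T(t)‖`.
-/

open Set Filter Topology

theorem LowerSemicontinuous.ennreal_toReal {α : Type*} [TopologicalSpace α] {f : α → ℝ≥0∞}
    (hf : LowerSemicontinuous f) (hfin : ∀ x, f x ≠ ∞) :
    LowerSemicontinuous fun x => (f x).toReal := by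
  intro x y hy
  rcases lt_or_ge y 0 with hy0 | hy0
  · exact Eventually.of_forall fun _ => hy0.trans_le ENNReal.toReal_nonneg
  · filter_upwards [hf x _ ((ENNReal.ofReal_lt_iff_lt_toReal hy0 (hfin x)).2 hy)] with x' hx'
    exact (ENNReal.ofReal_lt_iff_lt_toReal hy0 (hfin x')).1 hx'

theorem lowerSemicontinuous_eLpNorm {X α E : Type*} [TopologicalSpace X]
    [FirstCountableTopology X] [MeasurableSpace α] [NormedAddCommGroup E] {ν : Measure α}
    {p : ℝ≥0∞} (hp0 : p ≠ 0) (hp : p ≠ ∞) {F : X → α → E}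
    (hF : ∀ a, Continuous fun x => F x a) (hmeas : ∀ x, AEStronglyMeasurable (F x) ν) :
    LowerSemicontinuous fun x => eLpNorm (F x) p ν := by
  simp_rw [eLpNorm_eq_lintegral_rpow_enorm_toReal hp0 hp]
  refine ENNReal.continuous_rpow_const.comp_lowerSemicontinuous ?_
    (ENNReal.monotone_rpow_of_nonneg (by positivity))
  refine lowerSemicontinuous_iff_le_liminf.2 fun x => ?_
  calc ∫⁻ a, ‖F x a‖ₑ ^ p.toReal ∂ν
      = ∫⁻ a, liminf (fun y => ‖F y a‖ₑ ^ p.toReal) (𝓝 x) ∂ν := lintegral_congr fun a =>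
        ((ENNReal.continuous_rpow_const.comp (hF a).enorm).tendsto x).liminf_eq.symm
    _ ≤ _ := lintegral_liminf_le' fun y => (hmeas y).enorm.pow_const _

section UniformBoundedness

variable {ι X : Type*} [MeasurableSpace ι] [NormedAddCommGroup X] [NormedSpace ℝ X]
  (T : ι → X →L[ℝ] X) (p : ℝ≥0∞) [Fact (1 ≤ p)] (ν : Measure ι)

noncomputable def orbitSeminorm (hT : ∀ f, MemLp (fun t => T t f) p ν) : Seminorm ℝ X :=
  Seminorm.of (fun f => (eLpNorm (fun t => T t f) p ν).toReal)
    (fun f g => by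
      rw [← ENNReal.toReal_add (hT f).eLpNorm_ne_top (hT g).eLpNorm_ne_top]
      refine ENNReal.toReal_mono
        (ENNReal.add_ne_top.2 ⟨(hT f).eLpNorm_ne_top, (hT g).eLpNorm_ne_top⟩) ?_
      simp only [map_add]
      exact eLpNorm_add_le (hT f).1 (hT g).1 Fact.out)
    (fun c f => by
      simp only [map_smul]
      rw [← toReal_enorm, ← ENNReal.toReal_mul]
      exact congrArg ENNReal.toReal (eLpNorm_const_smul c (fun t => T t f) p ν))

variable {T p ν}

theorem continuous_orbitSeminorm [CompleteSpace X] (hp : p ≠ ∞)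
    (hT : ∀ f, MemLp (fun t => T t f) p ν) : Continuous (orbitSeminorm T p ν hT) :=
  Seminorm.continuous_of_lowerSemicontinuous _ <|
    (lowerSemicontinuous_eLpNorm (zero_lt_one.trans_le Fact.out).ne' hp
      (fun t => (T t).continuous) fun f => (hT f).1).ennreal_toReal
      fun f => (hT f).eLpNorm_ne_top

theorem exists_eLpNorm_orbit_le_of_memLp [CompleteSpace X] (hp : p ≠ ∞)
    (hT : ∀ f, MemLp (fun t => T t f) p ν) :
    ∃ C, 0 < C ∧ ∀ f, eLpNorm (fun t => T t f) p ν ≤ ENNReal.ofReal (C * ‖f‖) := by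
  obtain ⟨C, hC, hbound⟩ :=
    (orbitSeminorm T p ν hT).bound_of_continuous_normedSpace (continuous_orbitSeminorm hp hT)
  exact ⟨C, hC, fun f =>
    (ENNReal.le_ofReal_iff_toReal_le (hT f).eLpNorm_ne_top (by positivity)).2 (hbound f)⟩

end UniformBoundedness

theorem IsCompact.exists_pos_opNorm_le_of_continuousOn_apply {ι X : Type*} [TopologicalSpace ι]
    [NormedAddCommGroup X] [NormedSpace ℝ X] [CompleteSpace X] {T : ι → X →L[ℝ] X} {s : Set ι}
    (hs : IsCompact s) (hT : ∀ f, ContinuousOn (fun t => T t f) s) :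
    ∃ K, 0 < K ∧ ∀ t ∈ s, ‖T t‖ ≤ K := by
  obtain ⟨K, hK⟩ := banach_steinhaus (g := fun t : s => T t) fun f => by
    obtain ⟨C, hC⟩ := hs.exists_bound_of_continuousOn (hT f)
    exact ⟨C, fun t => hC t t.2⟩
  exact ⟨max K 1, by positivity, fun t ht => (hK ⟨t, ht⟩).trans (le_max_left _ _)⟩

section Submultiplicative

variable {g : ℝ → ℝ} {K t₀ : ℝ}

theorem le_mul_half_pow_of_submultiplicative
    (hmul : ∀ s t, 0 ≤ s → 0 ≤ t → g (s + t) ≤ g s * g t) (hg : ∀ t, 0 ≤ t → 0 ≤ g t)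
    (hK : ∀ t, 0 ≤ t → g t ≤ K) (ht₀ : 0 < t₀) (hhalf : g t₀ ≤ 1 / 2) (n : ℕ) :
    ∀ t, n * t₀ ≤ t → g t ≤ K * (1 / 2) ^ n := by
  induction n with
  | zero => intro t ht; simpa using hK t (by simpa using ht)
  | succ n ih =>
    intro t ht
    have hn : n * t₀ ≤ t - t₀ := by push_cast at ht; linarith
    have hK0 : 0 ≤ K := (hg 0 le_rfl).trans (hK 0 le_rfl)
    calc g t = g (t - t₀ + t₀) := by rw [sub_add_cancel]
      _ ≤ g (t - t₀) * g t₀ := hmul _ _ ((by positivity : (0 : ℝ) ≤ n * t₀).trans hn) ht₀.le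
      _ ≤ K * (1 / 2) ^ n * (1 / 2) := mul_le_mul (ih _ hn) hhalf (hg _ ht₀.le) (by positivity)
      _ = K * (1 / 2) ^ (n + 1) := by ring

theorem exists_exp_bound_of_submultiplicative
    (hmul : ∀ s t, 0 ≤ s → 0 ≤ t → g (s + t) ≤ g s * g t) (hg : ∀ t, 0 ≤ t → 0 ≤ g t)
    (hK : ∀ t, 0 ≤ t → g t ≤ K) (ht₀ : 0 < t₀) (hhalf : g t₀ ≤ 1 / 2) :
    ∃ ω : ℝ, ω < 0 ∧ ∃ M : ℝ, 1 ≤ M ∧ ∀ t, 0 ≤ t → g t ≤ M * Real.exp (ω * t) := by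
  have hK0 : 0 ≤ K := (hg 0 le_rfl).trans (hK 0 le_rfl)
  refine ⟨Real.log (1 / 2) / t₀, div_neg_of_neg_of_pos (Real.log_neg (by norm_num) (by norm_num))
    ht₀, max (2 * K) 1, le_max_right _ _, fun t ht => ?_⟩
  set n := ⌊t / t₀⌋₊
  have hn : t / t₀ ≤ n + 1 := (Nat.lt_floor_add_one _).le
  calc g t ≤ K * (1 / 2) ^ n :=
        le_mul_half_pow_of_submultiplicative hmul hg hK ht₀ hhalf n t
          ((le_div_iff₀ ht₀).1 (Nat.floor_le (by positivity)))
    _ = 2 * K * (1 / 2 : ℝ) ^ ((n : ℝ) + 1) := by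
        rw [← Nat.cast_succ, Real.rpow_natCast, pow_succ]; ring
    _ ≤ 2 * K * (1 / 2 : ℝ) ^ (t / t₀) := mul_le_mul_of_nonneg_left
        (Real.rpow_le_rpow_of_exponent_ge (by norm_num) (by norm_num) hn) (by positivity)
    _ = 2 * K * Real.exp (Real.log (1 / 2) / t₀ * t) := by
        rw [Real.rpow_def_of_pos (by norm_num)]; ring_nf
    _ ≤ max (2 * K) 1 * Real.exp (Real.log (1 / 2) / t₀ * t) := by gcongr; exact le_max_left _ _

end Submultiplicative

theorem mul_norm_apply_le_of_eLpNorm_orbit_le {X : Type*} [NormedAddCommGroup X]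
    [NormedSpace ℝ X] {T : ℝ → X →L[ℝ] X}
    (hsg : ∀ s t : ℝ, 0 ≤ s → 0 ≤ t → T (s + t) = (T s).comp (T t))
    {p : ℝ≥0∞} (hp0 : p ≠ 0) (hp : p ≠ ∞) {f : X} {a t c K B : ℝ} (ha : 0 ≤ a) (hc : 0 < c)
    (hct : c ^ p.toReal ≤ t - a) (hK : ∀ s ∈ Ioc a t, ‖T (t - s)‖ ≤ K) (hB0 : 0 ≤ B)
    (hB : eLpNorm (fun s => T s f) p (volume.restrict (Ioi 0)) ≤ ENNReal.ofReal B) :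
    c * ‖T t f‖ ≤ K * B := by
  have hr : 0 < p.toReal := ENNReal.toReal_pos hp0 hp
  have hat : a < t := by linarith [Real.rpow_pos_of_pos hc p.toReal]
  have hK0 : 0 ≤ K := (norm_nonneg _).trans (hK t ⟨hat, le_rfl⟩)
  have hpoint : ∀ s ∈ Ioc a t, ‖T t f‖ ≤ K * ‖T s f‖ := fun s hs => by
    have hsplit : T t = (T (t - s)).comp (T s) := by
      rw [← hsg _ _ (by linarith [hs.2]) (by linarith [hs.1]), sub_add_cancel]
    rw [hsplit]
    exact (T (t - s)).le_of_opNorm_le (hK s hs) _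
  have hlen : ENNReal.ofReal c ≤ volume (Ioc a t) ^ (1 / p.toReal) := by
    rw [Real.volume_Ioc, ENNReal.ofReal_rpow_of_nonneg (by linarith) (by positivity), one_div]
    exact ENNReal.ofReal_le_ofReal ((Real.le_rpow_inv_iff_of_pos hc.le (by linarith) hr).2 hct)
  refine (ENNReal.ofReal_le_ofReal_iff (by positivity)).1 ?_
  calc ENNReal.ofReal (c * ‖T t f‖) = ‖T t f‖ₑ * ENNReal.ofReal c := by
        rw [mul_comm, ENNReal.ofReal_mul (norm_nonneg _), ofReal_norm]
    _ ≤ ‖T t f‖ₑ * volume (Ioc a t) ^ (1 / p.toReal) := by gcongr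
    _ = eLpNorm (fun _ => T t f) p (volume.restrict (Ioc a t)) := by
        rw [eLpNorm_const' _ hp0 hp, Measure.restrict_apply_univ]
    _ ≤ ENNReal.ofReal K * eLpNorm (fun s => T s f) p (volume.restrict (Ioc a t)) :=
        eLpNorm_le_mul_eLpNorm_of_ae_le_mul
          ((ae_restrict_iff' measurableSet_Ioc).2 (ae_of_all _ hpoint)) p
    _ ≤ ENNReal.ofReal K * eLpNorm (fun s => T s f) p (volume.restrict (Ioi 0)) := by
        gcongr
        exact fun s hs => ha.trans_lt hs.1
    _ ≤ ENNReal.ofReal K * ENNReal.ofReal B := by gcongr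
    _ = ENNReal.ofReal (K * B) := (ENNReal.ofReal_mul hK0).symm

theorem stmt8_general {Ω : Type*} [MeasurableSpace Ω] (μ : Measure Ω)
    {p : ℝ≥0∞} [Fact (1 ≤ p)] (hp' : p ≠ ⊤)
    (T : ℝ → Lp ℝ p μ →L[ℝ] Lp ℝ p μ) (hT : IsC0Semigroup T)
    (hint : ∀ f : Lp ℝ p μ,
      IntegrableOn (fun t : ℝ => ‖T t f‖ ^ p.toReal) (Set.Ioi 0) volume) :
    ∃ ω : ℝ, ω < 0 ∧ ∃ M : ℝ, 1 ≤ M ∧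
      ∀ t : ℝ, 0 ≤ t → ‖T t‖ ≤ M * Real.exp (ω * t) := by
  obtain ⟨-, hsg, horb⟩ := hT
  have hp0 : p ≠ 0 := (zero_lt_one.trans_le Fact.out).ne'
  have hmem : ∀ f, MemLp (fun t => T t f) p (volume.restrict (Ioi 0)) := fun f =>
    (integrable_norm_rpow_iff (((horb f).mono Ioi_subset_Ici_self).aestronglyMeasurable
      measurableSet_Ioi) hp0 hp').1 (hint f)
  obtain ⟨C, hC, hCf⟩ := exists_eLpNorm_orbit_le_of_memLp hp' hmem
  obtain ⟨K, hK, hKT⟩ :=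
    (isCompact_Icc (a := 0) (b := 1)).exists_pos_opNorm_le_of_continuousOn_apply
      fun f => (horb f).mono Icc_subset_Ici_self
  set M := K * max C 1
  have hM : 0 < M := by positivity
  have hMT : ∀ t, 0 ≤ t → ‖T t‖ ≤ M := fun t ht => by
    rcases le_or_gt t 1 with ht1 | ht1
    · exact (hKT t ⟨ht, ht1⟩).trans (le_mul_of_one_le_right hK.le (le_max_right _ _))
    refine (T t).opNorm_le_bound hM.le fun f => ?_
    have := mul_norm_apply_le_of_eLpNorm_orbit_le hsg hp0 hp' (a := t - 1) (t := t)
      (by linarith) one_pos (by simp) (fun s hs => hKT _ ⟨by linarith [hs.2], by linarith [hs.1]⟩)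
      (by positivity) (hCf f)
    calc ‖T t f‖ ≤ K * (C * ‖f‖) := by simpa using this
      _ ≤ K * max C 1 * ‖f‖ := by rw [← mul_assoc]; gcongr; exact le_max_left C 1
  have hhalf : ‖T ((2 * M * C) ^ p.toReal)‖ ≤ 1 / 2 := by
    refine (T _).opNorm_le_bound (by norm_num) fun f => ?_
    have := mul_norm_apply_le_of_eLpNorm_orbit_le hsg hp0 hp' (t := (2 * M * C) ^ p.toReal)
      (c := 2 * M * C) le_rfl (by positivity) (by simp) (fun s hs => hMT _ (by linarith [hs.2]))
      (by positivity) (hCf f)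
    nlinarith [norm_nonneg (T ((2 * M * C) ^ p.toReal) f), mul_pos hM hC]
  exact exists_exp_bound_of_submultiplicative
    (fun s t hs ht => (hsg s t hs ht).symm ▸ (T s).opNorm_comp_le (T t))
    (fun _ _ => norm_nonneg _) hMT (by positivity) hhalf

/-- Datko's theorem in the form used in the paper. If `T` is a
`C₀`-semigroup on `L_p(μ)`, `1 < p < ∞`, such that `t ↦ ‖T(t)f‖^p` is integrable on
`(0, ∞)` for every `f`, then `ω₀(T) < 0`, i.e. there are `ω < 0` and `M ≥ 1` with
`‖T(t)‖ ≤ M e^{ωt}` for all `t ≥ 0`. -/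
theorem stmt8 {Ω : Type*} [MeasurableSpace Ω] (μ : Measure Ω)
    {p : ℝ≥0∞} [Fact (1 ≤ p)] (hp : 1 < p) (hp' : p ≠ ⊤)
    (T : ℝ → Lp ℝ p μ →L[ℝ] Lp ℝ p μ) (hT : IsC0Semigroup T)
    (hint : ∀ f : Lp ℝ p μ,
      IntegrableOn (fun t : ℝ => ‖T t f‖ ^ p.toReal) (Set.Ioi 0) volume) :
    ∃ ω : ℝ, ω < 0 ∧ ∃ M : ℝ, 1 ≤ M ∧
      ∀ t : ℝ, 0 ≤ t → ‖T t‖ ≤ M * Real.exp (ω * t) :=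
  stmt8_general μ hp' T hT hint
end
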